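/- Let G be a finite group and φ : G → GL(V) an absolutely irreducible representation over a field. If every element of G is conjugate to its inverse, then φ(G) preserves a nondegenerate symmetric or skew-symmetric bilinear form on V. -/

import Mathlib

/-!
Write `π : F[G] → End V` for the representation and `S` for the antipode `g ↦ g⁻¹` of the group
algebra. By Burnside's theorem (Jacobson density plus absolute irreducibility) `π` is surjective.
Since `g` is conjugate to `g⁻¹`, `tr ∘ π ∘ S = tr ∘ π`, and nondegeneracy of the trace form on
`End V` then shows `ker π` is `S`-stable, so `S` descends to an anti-involution `σ` of `End V`
with `σ (ρ g) = ρ g⁻¹`. For `φ₀, ψ ∈ V*`, `B v w = ψ (σ (φ₀ ⊗ v) w)` is a `G`-invariant form,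
nonzero for suitable `φ₀, ψ`. Its left kernel is invariant, so `B` is nondegenerate, and
either `B + Bᵗ ≠ 0` is symmetric or `B` is skew.
-/

open Module MonoidAlgebra HopfAlgebra LinearMap
open scoped MonoidAlgebra

lemma MonoidAlgebra.antipode_antipode {R G : Type*} [CommSemiring R] [Group G] (x : R[G]) :
    antipode R (antipode R x) = x := by
  induction x using MonoidAlgebra.induction_linear with
  | zero => simp
  | add x y hx hy => simp [hx, hy]
  | single g a => simp

lemma LinearMap.eq_zero_of_forall_trace_mul_eq_zero {F V : Type*} [Field F] [AddCommGroup V]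
    [Module F V] [FiniteDimensional F V] {f : Module.End F V}
    (h : ∀ g : Module.End F V, trace F V (f * g) = 0) : f = 0 := by
  ext v
  rw [zero_apply, ← forall_dual_apply_eq_zero_iff F (f v)]
  intro φ
  have hcomp : f * φ.smulRight v = φ.smulRight (f v) := by ext; simp
  simpa [hcomp, trace_smulRight] using h (φ.smulRight v)

lemma LinearMap.exists_comp_eq_of_ker_le {R M N P : Type*} [CommRing R] [AddCommGroup M]
    [AddCommGroup N] [AddCommGroup P] [Module R M] [Module R N] [Module R P]
    {π : M →ₗ[R] N} (hπ : Function.Surjective π) {T : M →ₗ[R] P} (h : ker π ≤ ker T) :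
    ∃ σ : N →ₗ[R] P, σ ∘ₗ π = T :=
  ⟨(ker π).liftQ T h ∘ₗ (π.quotKerEquivOfSurjective hπ).symm.toLinearMap, by ext; simp⟩

namespace Representation

variable {G F V : Type*} [Group G] [Field F] [AddCommGroup V] [Module F V]
  (ρ : Representation F G V)

def IsInvariantForm (B : V →ₗ[F] V →ₗ[F] F) : Prop :=
  ∀ (g : G) (v w : V), B (ρ g v) (ρ g w) = B v w

lemma isSimpleModule_asModule [Nontrivial V]
    (hirr : ∀ W : Submodule F V, (∀ g : G, ∀ v ∈ W, ρ g v ∈ W) → W = ⊥ ∨ W = ⊤) :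
    IsSimpleModule F[G] ρ.asModule := by
  have : Nontrivial ρ.asModule := ‹Nontrivial V›
  refine { eq_bot_or_eq_top := fun N => ?_ }
  let W := Subrepresentation.ofSubmodule' N
  rcases hirr W.toSubmodule W.apply_mem_toSubmodule with h | h
  · exact .inl <| SetLike.ext fun v => SetLike.ext_iff.mp h v
  · exact .inr <| SetLike.ext fun v => SetLike.ext_iff.mp h v

/-- Burnside's theorem. -/
theorem asAlgebraHom_surjective [FiniteDimensional F V] [IsSimpleModule F[G] ρ.asModule]
    (habs : ∀ f : V →ₗ[F] V, (∀ g : G, f ∘ₗ ρ g = ρ g ∘ₗ f) → ∃ c : F, f = c • LinearMap.id) :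
    Function.Surjective ρ.asAlgebraHom := by
  classical
  intro f
  let f' : Module.End (Module.End F[G] ρ.asModule) ρ.asModule :=
    { toFun := f
      map_add' := f.map_add
      map_smul' := fun φ m => by
        let φ' := (IntertwiningMap.equivLinearMapAsModule ρ ρ).symm φ
        obtain ⟨c, hc⟩ := habs φ'.toLinearMap φ'.isIntertwining'
        have hφ : ∀ v : V, φ v = c • v := fun v => LinearMap.congr_fun hc v
        exact (congrArg f (hφ m)).trans ((f.map_smul c m).trans (hφ (f m)).symm) }
  let b := Module.finBasis F V
  obtain ⟨r, hr⟩ := jacobson_density f' (Finset.univ.image (ρ.asModuleEquiv.symm ∘ b))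
  exact ⟨r, b.ext fun i => (hr (b i) (Finset.mem_image_of_mem _ (Finset.mem_univ i))).symm⟩

lemma trace_asAlgebraHom_antipode (hreal : ∀ g : G, IsConj g g⁻¹)
    (x : F[G]) : trace F V (ρ.asAlgebraHom (antipode F x)) = trace F V (ρ.asAlgebraHom x) := by
  induction x using MonoidAlgebra.induction_linear with
  | zero => simp
  | add x y hx hy => simp only [map_add, hx, hy]
  | single g a =>
    obtain ⟨u, hu⟩ := isConj_iff.mp (hreal g)
    have h : trace F V (ρ g⁻¹) = trace F V (ρ g) := by rw [← hu]; exact ρ.char_conj g u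
    simp [asAlgebraHom_single, h]

lemma ker_asAlgebraHom_le_ker_comp_antipode [FiniteDimensional F V]
    (hsurj : Function.Surjective ρ.asAlgebraHom) (hreal : ∀ g : G, IsConj g g⁻¹) :
    ker ρ.asAlgebraHom.toLinearMap ≤ ker (ρ.asAlgebraHom.toLinearMap ∘ₗ antipode F) := by
  intro x hx
  replace hx : ρ.asAlgebraHom x = 0 := hx
  refine eq_zero_of_forall_trace_mul_eq_zero fun f => ?_
  obtain ⟨y, rfl⟩ := hsurj f
  calc trace F V (ρ.asAlgebraHom (antipode F x) * ρ.asAlgebraHom y)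
      = trace F V (ρ.asAlgebraHom (antipode F (antipode F y * x))) := by
        rw [antipode_mul_antidistrib, antipode_antipode, _root_.map_mul ρ.asAlgebraHom]
    _ = 0 := by rw [trace_asAlgebraHom_antipode ρ hreal, map_mul, hx, mul_zero, map_zero]

lemma exists_isInvariantForm_ne_zero [Nontrivial V] (hsurj : Function.Surjective ρ.asAlgebraHom)
    {σ : Module.End F V →ₗ[F] Module.End F V}
    (hσ : σ ∘ₗ ρ.asAlgebraHom.toLinearMap = ρ.asAlgebraHom.toLinearMap ∘ₗ antipode F) :
    ∃ B : V →ₗ[F] V →ₗ[F] F, B ≠ 0 ∧ ρ.IsInvariantForm B := by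
  have hσ' (x : F[G]) : σ (ρ.asAlgebraHom x) = ρ.asAlgebraHom (antipode F x) :=
    LinearMap.congr_fun hσ x
  obtain ⟨v₀, hv₀⟩ := exists_ne (0 : V)
  obtain ⟨φ₀, hφ₀⟩ := Projective.exists_dual_ne_zero F hv₀
  obtain ⟨x, hx⟩ := hsurj (φ₀.smulRight v₀)
  have hσx : σ (φ₀.smulRight v₀) ≠ 0 := by
    -- `σ` is an involution on the image of `π`, hence injective
    intro h
    have : φ₀.smulRight v₀ = 0 := by
      rw [← hx, ← antipode_antipode x, ← hσ', ← hσ', hx, h, map_zero]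
    exact hφ₀ (by simpa [hv₀] using LinearMap.congr_fun this v₀)
  obtain ⟨w₀, hw₀⟩ : ∃ w, σ (φ₀.smulRight v₀) w ≠ 0 := by
    by_contra! h
    exact hσx (LinearMap.ext h)
  obtain ⟨ψ, hψ⟩ := Projective.exists_dual_ne_zero F hw₀
  refine ⟨llcomp F V V F ψ ∘ₗ σ ∘ₗ smulRightₗ φ₀, fun hB => hψ ?_, fun g v w => ?_⟩
  · simpa using LinearMap.congr_fun₂ hB v₀ w₀
  obtain ⟨y, hy⟩ := hsurj (φ₀.smulRight v)
  have hgy : φ₀.smulRight (ρ g v) = ρ.asAlgebraHom (single g 1 * y) := by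
    ext; simp [hy]
  simp only [coe_comp, Function.comp_apply, smulRightₗ_apply, llcomp_apply]
  rw [hgy, hσ', antipode_mul_antidistrib, _root_.map_mul, Module.End.mul_apply, ← hσ', hy]
  simp

lemma IsInvariantForm.eq_zero_of_forall_apply_eq_zero {ρ : Representation F G V}
    (hirr : ∀ W : Submodule F V, (∀ g : G, ∀ v ∈ W, ρ g v ∈ W) → W = ⊥ ∨ W = ⊤)
    {B : V →ₗ[F] V →ₗ[F] F} (hB : ρ.IsInvariantForm B) (hB0 : B ≠ 0) {v : V}
    (hv : ∀ w, B v w = 0) : v = 0 := by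
  have hker : ∀ g : G, ∀ u ∈ ker B, ρ g u ∈ ker B := by
    intro g u hu
    ext w
    rw [mem_ker] at hu
    rw [← ρ.self_inv_apply g w, hB g u, hu, LinearMap.zero_apply, LinearMap.zero_apply]
  have hv' : v ∈ ker B := LinearMap.ext hv
  rcases hirr _ hker with h | h
  · exact (Submodule.mem_bot F).mp (h ▸ hv')
  · exact absurd (ker_eq_top.mp h) hB0

lemma IsInvariantForm.exists_symm_or_skew {ρ : Representation F G V} {B : V →ₗ[F] V →ₗ[F] F}
    (hB : ρ.IsInvariantForm B) (hB0 : B ≠ 0) :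
    ∃ B' : V →ₗ[F] V →ₗ[F] F, B' ≠ 0 ∧ ρ.IsInvariantForm B' ∧
      ((∀ v w : V, B' v w = B' w v) ∨ (∀ v w : V, B' v w = - B' w v)) := by
  by_cases h : B + B.flip = 0
  · exact ⟨B, hB0, hB, .inr fun v w => eq_neg_of_add_eq_zero_left (LinearMap.congr_fun₂ h v w)⟩
  · exact ⟨B + B.flip, h, fun g v w => by simp [hB g], .inl fun v w => by simp [add_comm]⟩

end Representation

theorem real_group_invariant_form_general
    {G F V : Type*} [Group G] [Field F] [AddCommGroup V] [Module F V]
    [FiniteDimensional F V] (ρ : Representation F G V)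
    (hirr : ∀ W : Submodule F V, (∀ g : G, ∀ v ∈ W, ρ g v ∈ W) → W = ⊥ ∨ W = ⊤)
    (habs : ∀ f : V →ₗ[F] V, (∀ g : G, f ∘ₗ ρ g = ρ g ∘ₗ f) →
      ∃ c : F, f = c • LinearMap.id)
    (hreal : ∀ g : G, IsConj g g⁻¹) :
    ∃ B : V →ₗ[F] V →ₗ[F] F,
      (∀ v : V, (∀ w : V, B v w = 0) → v = 0) ∧
      (∀ (g : G) (v w : V), B (ρ g v) (ρ g w) = B v w) ∧
      ((∀ v w : V, B v w = B w v) ∨ (∀ v w : V, B v w = - B w v)) := by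
  rcases subsingleton_or_nontrivial V with hV | hV
  · exact ⟨0, fun v _ => Subsingleton.elim v 0, fun _ _ _ => rfl, .inl fun _ _ => rfl⟩
  have := ρ.isSimpleModule_asModule hirr
  have hsurj := ρ.asAlgebraHom_surjective habs
  obtain ⟨σ, hσ⟩ := exists_comp_eq_of_ker_le hsurj
    (ρ.ker_asAlgebraHom_le_ker_comp_antipode hsurj hreal)
  obtain ⟨B, hB0, hB⟩ := ρ.exists_isInvariantForm_ne_zero hsurj hσ
  obtain ⟨B', hB'0, hB', hsymm⟩ := hB.exists_symm_or_skew hB0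
  exact ⟨B', fun v hv => hB'.eq_zero_of_forall_apply_eq_zero hirr hB'0 hv, hB', hsymm⟩

/-- If every element of the finite group `G` is conjugate to its inverse, then an
absolutely irreducible representation of `G` preserves a nondegenerate symmetric
or skew-symmetric bilinear form. -/
theorem real_group_invariant_form
    {G F V : Type*} [Group G] [Finite G] [Field F] [AddCommGroup V] [Module F V]
    [FiniteDimensional F V] (ρ : Representation F G V)
    (hirr : ∀ W : Submodule F V, (∀ g : G, ∀ v ∈ W, ρ g v ∈ W) → W = ⊥ ∨ W = ⊤)
    (habs : ∀ f : V →ₗ[F] V, (∀ g : G, f ∘ₗ ρ g = ρ g ∘ₗ f) →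
      ∃ c : F, f = c • LinearMap.id)
    (hreal : ∀ g : G, IsConj g g⁻¹) :
    ∃ B : V →ₗ[F] V →ₗ[F] F,
      (∀ v : V, (∀ w : V, B v w = 0) → v = 0) ∧
      (∀ (g : G) (v w : V), B (ρ g v) (ρ g w) = B v w) ∧
      ((∀ v w : V, B v w = B w v) ∨ (∀ v w : V, B v w = - B w v)) :=
  real_group_invariant_form_general ρ hirr habs hreal
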